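/- Let Σ ∈ ℝ^{p×p} be positive definite, θ0 ∈ ℝ^p with support S, and ξ > 0; let θ̂∞(ξ) be the unique population-level estimator. Let T ⊇ S and v ∈ {+1,0,−1}^p with supp(v) = T. Then sign(θ̂∞(ξ)) = v if and only if both (i) ‖Σ_{T^c,T} Σ_{T,T}^{-1} v_T‖_∞ ≤ 1 and (ii) v_T = sign(θ0_T − ξ Σ_{T,T}^{-1} v_T). Furthermore, in that case θ̂∞(ξ) is given by θ̂∞_{T^c} = 0 and θ̂∞_T = θ0_T − ξ Σ_{T,T}^{-1} v_T. -/

import Mathlib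

/-!
The objective is strictly convex, and its minimiser is characterised by the KKT conditions
`Σ(θ - θ0) = -ξ z` with `|z_i| ≤ 1` and `z_i = sign θ_i` wherever `θ_i ≠ 0`: necessity comes from
perturbing a single coordinate, sufficiency and uniqueness from expanding the quadratic around a
KKT point. Let `w` be `Σ_{T,T}⁻¹ v_T` extended by zero, so that `(Σ w)_T = v_T`. If `sign θ̂ = v`,
the KKT equations on `T` pin down `θ̂ - θ0 = -ξ w` (positive definiteness makes `Σ` injective on
vectors supported in `T`), and the KKT inequalities off `T` give (i). Conversely, under (i) and
(ii) the vector `θ0 - ξ w` satisfies the KKT conditions with `z = Σ w`, so it is `θ̂`.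
-/

open Matrix Finset MeasureTheory ProbabilityTheory
noncomputable section

/-- The ℓ¹ norm of a vector. -/
def l1n {p : ℕ} (v : Fin p → ℝ) : ℝ := ∑ i, |v i|

/-- The number of nonzero entries of a vector (its "ℓ⁰ norm"). -/
def l0n {p : ℕ} (v : Fin p → ℝ) : ℕ := (Finset.univ.filter fun i => v i ≠ 0).card

/-- The support of a vector, as a `Finset`. -/
def suppv {p : ℕ} (v : Fin p → ℝ) : Finset (Fin p) := Finset.univ.filter fun i => v i ≠ 0

/-- The entrywise sign vector. -/
def sgnv {p : ℕ} (v : Fin p → ℝ) : Fin p → ℝ := fun i => Real.sign (v i)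

/-- The zero-noise Lasso objective
`θ ↦ (1/2)⟨θ−θ0, Σ(θ−θ0)⟩ + ξ‖θ‖₁`. -/
def znObj {p : ℕ} (S : Matrix (Fin p) (Fin p) ℝ) (th0 : Fin p → ℝ) (xi : ℝ)
    (th : Fin p → ℝ) : ℝ :=
  (1/2) * ((th - th0) ⬝ᵥ (S *ᵥ (th - th0))) + xi * l1n th

/-- The Lasso objective `θ ↦ (1/(2n))‖Y − Xθ‖₂² + λ‖θ‖₁`. -/
def lassoObj {n p : ℕ} (X : Matrix (Fin n) (Fin p) ℝ) (Y : Fin n → ℝ) (lam : ℝ)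
    (th : Fin p → ℝ) : ℝ :=
  (1/(2*(n:ℝ))) * (∑ i, (Y i - (X *ᵥ th) i)^2) + lam * l1n th

/-- The submatrix `A_{T,T'}` with rows in `T` and columns in `T'`. -/
def subM {p : ℕ} (A : Matrix (Fin p) (Fin p) ℝ) (T T' : Finset (Fin p)) : Matrix ↥T ↥T' ℝ :=
  A.submatrix Subtype.val Subtype.val

/-- The restriction `v_T` of a vector to coordinates in `T`. -/
def restrv {p : ℕ} (v : Fin p → ℝ) (T : Finset (Fin p)) : ↥T → ℝ := fun i => v i

/-- Extension of a vector indexed by `T` to a vector indexed by `Fin p`, by zero. -/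
def extendT {p : ℕ} (T : Finset (Fin p)) (g : ↥T → ℝ) : Fin p → ℝ :=
  fun i => if h : i ∈ T then g ⟨i, h⟩ else 0

open Filter Topology

lemma Real.sign_mul_self (r : ℝ) : Real.sign r * r = |r| := by
  rcases lt_trichotomy r 0 with hr | rfl | hr
  · rw [Real.sign_of_neg hr, abs_of_neg hr]; ring
  · simp
  · rw [Real.sign_of_pos hr, abs_of_pos hr]; ring

lemma Real.abs_add_sub_abs_of_abs_lt {c t : ℝ} (ht : |t| < |c|) :
    |c + t| - |c| = Real.sign c * t := by
  rcases lt_trichotomy c 0 with hc | rfl | hc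
  · rw [abs_of_neg hc] at ht
    rw [Real.sign_of_neg hc, abs_of_neg hc, abs_of_neg (by linarith [le_abs_self t])]; ring
  · exact absurd ht (by simp)
  · rw [abs_of_pos hc] at ht
    rw [Real.sign_of_pos hc, abs_of_pos hc, abs_of_pos (by linarith [neg_abs_le t])]; ring

lemma nonneg_of_forall_mul_add_mul_sq_nonneg {m b δ : ℝ} (hδ : 0 < δ)
    (h : ∀ t, 0 < t → t < δ → 0 ≤ m * t + b * t ^ 2) : 0 ≤ m := by
  have hlim : Tendsto (fun t => m + b * t) (𝓝[>] 0) (𝓝 m) := by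
    have hcont : Continuous fun t : ℝ => m + b * t := by fun_prop
    simpa using (hcont.tendsto 0).mono_left nhdsWithin_le_nhds
  refine ge_of_tendsto hlim ?_
  filter_upwards [Ioo_mem_nhdsGT hδ] with t ⟨ht0, htδ⟩
  exact (mul_nonneg_iff_of_pos_left ht0).mp (by linarith [h t ht0 htδ])

lemma eq_neg_mul_sign_of_forall_nonneg {a b c ξ : ℝ} (hc : c ≠ 0)
    (h : ∀ t, 0 ≤ a * t + b * t ^ 2 + ξ * (|c + t| - |c|)) : a = -ξ * Real.sign c := by
  have key : ∀ t, |t| < |c| → 0 ≤ (a + ξ * Real.sign c) * t + b * t ^ 2 := fun t ht => by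
    have := h t
    rw [Real.abs_add_sub_abs_of_abs_lt ht] at this
    linarith
  have hpos := nonneg_of_forall_mul_add_mul_sq_nonneg (abs_pos.2 hc) fun t ht0 htc =>
    key t (by rwa [abs_of_pos ht0])
  have hneg := nonneg_of_forall_mul_add_mul_sq_nonneg (m := -(a + ξ * Real.sign c))
    (b := b) (abs_pos.2 hc) fun t ht0 htc => by
      have := key (-t) (by rwa [abs_neg, abs_of_pos ht0])
      linarith
  linarith

lemma abs_le_of_forall_nonneg {a b ξ : ℝ} (h : ∀ t, 0 ≤ a * t + b * t ^ 2 + ξ * |t|) :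
    |a| ≤ ξ := by
  have hpos := nonneg_of_forall_mul_add_mul_sq_nonneg (m := a + ξ) (b := b) one_pos
    fun t ht0 _ => by
      have := h t
      rw [abs_of_pos ht0] at this
      linarith
  have hneg := nonneg_of_forall_mul_add_mul_sq_nonneg (m := -a + ξ) (b := b) one_pos
    fun t ht0 _ => by
      have := h (-t)
      rw [abs_neg, abs_of_pos ht0] at this
      linarith
  exact abs_le.2 ⟨by linarith, by linarith⟩

section QuadraticForm

variable {ι : Type*} [Fintype ι] {M : Matrix ι ι ℝ}

lemma Matrix.IsSymm.dotProduct_mulVec_comm (hM : M.IsSymm) (x y : ι → ℝ) :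
    x ⬝ᵥ (M *ᵥ y) = y ⬝ᵥ (M *ᵥ x) := by
  rw [dotProduct_mulVec, dotProduct_comm, ← mulVec_transpose, hM.eq]

lemma Matrix.IsSymm.dotProduct_mulVec_add_self (hM : M.IsSymm) (x d : ι → ℝ) :
    (x + d) ⬝ᵥ (M *ᵥ (x + d)) = x ⬝ᵥ (M *ᵥ x) + 2 * (d ⬝ᵥ (M *ᵥ x)) + d ⬝ᵥ (M *ᵥ d) := by
  rw [mulVec_add, dotProduct_add, add_dotProduct, add_dotProduct, hM.dotProduct_mulVec_comm x d]
  ring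

lemma Matrix.PosDef.eq_zero_of_dotProduct_mulVec_self_nonpos (hM : M.PosDef) {x : ι → ℝ}
    (hx : x ⬝ᵥ (M *ᵥ x) ≤ 0) : x = 0 := by
  by_contra hne
  have := hM.dotProduct_mulVec_pos hne
  rw [star_trivial] at this
  linarith

lemma Matrix.PosDef.eq_of_mulVec_apply_eq (hM : M.PosDef) {s : Set ι} {x y : ι → ℝ}
    (hout : ∀ j ∉ s, x j = y j) (hin : ∀ i ∈ s, (M *ᵥ x) i = (M *ᵥ y) i) : x = y := by
  refine sub_eq_zero.mp (hM.eq_zero_of_dotProduct_mulVec_self_nonpos (le_of_eq ?_))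
  refine Finset.sum_eq_zero fun i _ => ?_
  by_cases hi : i ∈ s
  · simp [mulVec_sub, hin i hi]
  · simp [hout i hi]

end QuadraticForm

section SubmatrixInverse

variable {p : ℕ} {Sig : Matrix (Fin p) (Fin p) ℝ} {T : Finset (Fin p)}

lemma mulVec_extendT_apply (g : ↥T → ℝ) {i : Fin p} (hi : i ∈ T) :
    (Sig *ᵥ extendT T g) i = (subM Sig T T *ᵥ g) ⟨i, hi⟩ := by
  simp only [mulVec, dotProduct, extendT, mul_dite, mul_zero]
  exact (Finset.sum_attach_eq_sum_dite T fun k => Sig i k * g k).symm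

lemma mulVec_extendT_subM_inv_mulVec (hSig : Sig.PosDef) (g : ↥T → ℝ) {i : Fin p}
    (hi : i ∈ T) : (Sig *ᵥ extendT T ((subM Sig T T)⁻¹ *ᵥ g)) i = g ⟨i, hi⟩ := by
  have hdet : IsUnit (subM Sig T T).det :=
    (hSig.submatrix Subtype.val_injective).det_pos.ne'.isUnit
  rw [mulVec_extendT_apply _ hi, mulVec_mulVec, mul_nonsing_inv _ hdet, one_mulVec]

end SubmatrixInverse

section ZeroNoiseLasso

variable {p : ℕ} {Sig : Matrix (Fin p) (Fin p) ℝ} {th0 : Fin p → ℝ} {xi : ℝ}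

lemma dotProduct_le_l1n {z : Fin p → ℝ} (hz : ∀ i, |z i| ≤ 1) (x : Fin p → ℝ) :
    z ⬝ᵥ x ≤ l1n x :=
  Finset.sum_le_sum fun i _ => calc
    z i * x i ≤ |z i| * |x i| := by rw [← abs_mul]; exact le_abs_self _
    _ ≤ |x i| := mul_le_of_le_one_left (abs_nonneg _) (hz i)

lemma dotProduct_eq_l1n {z x : Fin p → ℝ} (hz : ∀ i, x i ≠ 0 → z i = Real.sign (x i)) :
    z ⬝ᵥ x = l1n x := by
  refine Finset.sum_congr rfl fun i _ => ?_
  by_cases hx : x i = 0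
  · simp [hx]
  · rw [hz i hx, Real.sign_mul_self]

lemma l1n_add_single (x : Fin p → ℝ) (i : Fin p) (t : ℝ) :
    l1n (x + Pi.single i t) = l1n x + (|x i + t| - |x i|) := by
  rw [← sub_eq_iff_eq_add']
  unfold l1n
  rw [← Finset.sum_sub_distrib, Finset.sum_eq_single i (fun j _ hj => by simp [hj]) (by simp)]
  simp

lemma znObj_add (hS : Sig.IsSymm) (th d : Fin p → ℝ) :
    znObj Sig th0 xi (th + d) = znObj Sig th0 xi th + d ⬝ᵥ (Sig *ᵥ (th - th0))
      + d ⬝ᵥ (Sig *ᵥ d) / 2 + xi * (l1n (th + d) - l1n th) := by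
  unfold znObj
  rw [show th + d - th0 = (th - th0) + d by abel, hS.dotProduct_mulVec_add_self]
  ring

lemma znObj_add_single (hS : Sig.IsSymm) (th : Fin p → ℝ) (i : Fin p) (t : ℝ) :
    znObj Sig th0 xi (th + Pi.single i t) = znObj Sig th0 xi th
      + ((Sig *ᵥ (th - th0)) i * t + Sig i i / 2 * t ^ 2 + xi * (|th i + t| - |th i|)) := by
  rw [znObj_add hS, l1n_add_single, single_dotProduct, single_dotProduct, mulVec_single]
  simp only [Pi.smul_apply, col_apply, MulOpposite.smul_eq_mul_unop, MulOpposite.unop_op]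
  ring

variable {thinf : Fin p → ℝ}

lemma coord_increment_nonneg_of_min
    (hmin : ∀ th, znObj Sig th0 xi thinf ≤ znObj Sig th0 xi th) (hS : Sig.IsSymm)
    (i : Fin p) (t : ℝ) :
    0 ≤ (Sig *ᵥ (thinf - th0)) i * t + Sig i i / 2 * t ^ 2 + xi * (|thinf i + t| - |thinf i|) := by
  have := hmin (thinf + Pi.single i t)
  rw [znObj_add_single hS] at this
  linarith

lemma mulVec_sub_apply_eq_of_min
    (hmin : ∀ th, znObj Sig th0 xi thinf ≤ znObj Sig th0 xi th) (hS : Sig.IsSymm)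
    {i : Fin p} (hi : thinf i ≠ 0) :
    (Sig *ᵥ (thinf - th0)) i = -xi * Real.sign (thinf i) :=
  eq_neg_mul_sign_of_forall_nonneg hi (coord_increment_nonneg_of_min hmin hS i)

lemma abs_mulVec_sub_apply_le_of_min
    (hmin : ∀ th, znObj Sig th0 xi thinf ≤ znObj Sig th0 xi th) (hS : Sig.IsSymm)
    {i : Fin p} (hi : thinf i = 0) : |(Sig *ᵥ (thinf - th0)) i| ≤ xi :=
  abs_le_of_forall_nonneg fun t => by
    simpa [hi] using coord_increment_nonneg_of_min hmin hS i t

lemma znObj_add_le_of_kkt (hS : Sig.IsSymm) (hxi : 0 ≤ xi) {ts z : Fin p → ℝ}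
    (hz : ∀ i, |z i| ≤ 1) (hz_sign : ∀ i, ts i ≠ 0 → z i = Real.sign (ts i))
    (hstat : Sig *ᵥ (ts - th0) = -xi • z) (th : Fin p → ℝ) :
    znObj Sig th0 xi ts + (th - ts) ⬝ᵥ (Sig *ᵥ (th - ts)) / 2 ≤ znObj Sig th0 xi th := by
  have hexp := znObj_add hS ts (th - ts) (th0 := th0) (xi := xi)
  rw [add_sub_cancel, hstat, dotProduct_smul, smul_eq_mul, dotProduct_comm, dotProduct_sub,
    dotProduct_eq_l1n hz_sign] at hexp
  nlinarith [mul_nonneg hxi (sub_nonneg.2 (dotProduct_le_l1n hz th))]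

lemma eq_of_min_of_kkt (hSig : Sig.PosDef) (hxi : 0 ≤ xi)
    (hmin : ∀ th, znObj Sig th0 xi thinf ≤ znObj Sig th0 xi th) {ts z : Fin p → ℝ}
    (hz : ∀ i, |z i| ≤ 1) (hz_sign : ∀ i, ts i ≠ 0 → z i = Real.sign (ts i))
    (hstat : Sig *ᵥ (ts - th0) = -xi • z) : thinf = ts := by
  have hS : Sig.IsSymm := isHermitian_iff_isSymm.mp hSig.isHermitian
  have := znObj_add_le_of_kkt hS hxi hz hz_sign hstat thinf
  exact sub_eq_zero.mp <| hSig.eq_zero_of_dotProduct_mulVec_self_nonpos (by linarith [hmin ts])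

end ZeroNoiseLasso

section SignedSupport

variable {p : ℕ} {Sig : Matrix (Fin p) (Fin p) ℝ} {th0 thinf v w : Fin p → ℝ} {xi : ℝ}
  {T : Finset (Fin p)}

lemma eq_sub_smul_of_sgnv_eq (hSig : Sig.PosDef)
    (hmin : ∀ th, znObj Sig th0 xi thinf ≤ znObj Sig th0 xi th)
    (hth0 : ∀ j ∉ T, th0 j = 0) (hw : ∀ j ∉ T, w j = 0) (hSw : ∀ i ∈ T, (Sig *ᵥ w) i = v i)
    (hvT : ∀ i, v i ≠ 0 ↔ i ∈ T) (hsgn : sgnv thinf = v) : thinf = th0 - xi • w := by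
  have hS : Sig.IsSymm := isHermitian_iff_isSymm.mp hSig.isHermitian
  have hsgn_i : ∀ i, Real.sign (thinf i) = v i := congrFun hsgn
  have hthinf : ∀ i, thinf i ≠ 0 ↔ i ∈ T := fun i => by
    rw [← hvT, ← hsgn_i, Ne, Ne, Real.sign_eq_zero_iff]
  have hdiff : thinf - th0 = -xi • w := by
    refine hSig.eq_of_mulVec_apply_eq (s := T) (fun j hj => ?_) (fun i hi => ?_)
    · simp [not_not.mp ((hthinf j).not.mpr hj), hth0 j hj, hw j hj]
    · rw [mulVec_sub_apply_eq_of_min hmin hS ((hthinf i).mpr hi), hsgn_i, mulVec_smul,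
        Pi.smul_apply, hSw i hi, smul_eq_mul]
  rw [sub_eq_iff_eq_add'.mp hdiff, neg_smul, ← sub_eq_add_neg]

lemma eq_sub_smul_of_sign_conditions (hSig : Sig.PosDef) (hxi : 0 ≤ xi)
    (hmin : ∀ th, znObj Sig th0 xi thinf ≤ znObj Sig th0 xi th)
    (hth0 : ∀ j ∉ T, th0 j = 0) (hw : ∀ j ∉ T, w j = 0) (hSw : ∀ i ∈ T, (Sig *ᵥ w) i = v i)
    (hv : ∀ i, |v i| ≤ 1) (hout : ∀ j ∉ T, |(Sig *ᵥ w) j| ≤ 1)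
    (hin : ∀ i ∈ T, v i = Real.sign (th0 i - xi * w i)) : thinf = th0 - xi • w := by
  refine eq_of_min_of_kkt hSig hxi hmin (z := Sig *ᵥ w) (fun i => ?_) (fun i hne => ?_) ?_
  · by_cases hi : i ∈ T
    · rw [hSw i hi]; exact hv i
    · exact hout i hi
  · have hi : i ∈ T := by
      by_contra hi
      exact hne (by simp [hth0 i hi, hw i hi])
    rw [hSw i hi]
    exact hin i hi
  · rw [sub_sub_cancel_left, mulVec_neg, mulVec_smul, neg_smul]

end SignedSupport

/-- Lemma 8 of the paper.  Characterization of the signed support of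
the population-level estimator: for `Σ` positive definite, `T ⊇ S`, `v ∈ {+1,0,−1}^p`
with `supp(v) = T`, `sign(θ̂∞(ξ)) = v` iff (i) `‖Σ_{Tᶜ,T}Σ_{T,T}^{-1}v_T‖_∞ ≤ 1` and
(ii) `v_T = sign(θ0_T − ξΣ_{T,T}^{-1}v_T)`; and in that case `θ̂∞_{Tᶜ} = 0` and
`θ̂∞_T = θ0_T − ξΣ_{T,T}^{-1}v_T`. -/
theorem stmt11
    (p : ℕ)
    (Sig : Matrix (Fin p) (Fin p) ℝ) (hSig : Sig.PosDef)
    (th0 : Fin p → ℝ)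
    (xi : ℝ) (hxi : 0 < xi)
    (thinf : Fin p → ℝ)
    (hmin : ∀ th : Fin p → ℝ, znObj Sig th0 xi thinf ≤ znObj Sig th0 xi th)
    (T : Finset (Fin p)) (hST : suppv th0 ⊆ T)
    (v : Fin p → ℝ) (hv : ∀ i, v i = 1 ∨ v i = 0 ∨ v i = -1)
    (hsuppv : suppv v = T) :
    (sgnv thinf = v ↔
      ((∀ j, j ∉ T → |(Sig *ᵥ extendT T ((subM Sig T T)⁻¹ *ᵥ restrv v T)) j| ≤ 1) ∧
       (∀ i ∈ T, v i =
          Real.sign (th0 i - xi * extendT T ((subM Sig T T)⁻¹ *ᵥ restrv v T) i)))) ∧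
    (sgnv thinf = v →
      (∀ i ∈ T, thinf i = th0 i - xi * extendT T ((subM Sig T T)⁻¹ *ᵥ restrv v T) i) ∧
      (∀ j, j ∉ T → thinf j = 0)) := by
  set w := extendT T ((subM Sig T T)⁻¹ *ᵥ restrv v T) with hw_def
  have hS : Sig.IsSymm := isHermitian_iff_isSymm.mp hSig.isHermitian
  have hvT : ∀ i, v i ≠ 0 ↔ i ∈ T := fun i => by simp [← hsuppv, suppv]
  have hth0 : ∀ j ∉ T, th0 j = 0 := fun j hj => by_contra fun h => hj (hST (by simp [suppv, h]))
  have hw : ∀ j ∉ T, w j = 0 := fun j hj => by simp [hw_def, extendT, hj]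
  have hSw : ∀ i ∈ T, (Sig *ᵥ w) i = v i := fun i hi =>
    mulVec_extendT_subM_inv_mulVec hSig _ hi
  have hsol := eq_sub_smul_of_sgnv_eq hSig hmin hth0 hw hSw hvT
  refine ⟨⟨fun hsgn => ⟨fun j hj => ?_, fun i hi => ?_⟩, fun ⟨hout, hin⟩ => ?_⟩,
    fun hsgn => ⟨fun i hi => by rw [hsol hsgn]; rfl,
      fun j hj => by simp [hsol hsgn, hth0 j hj, hw j hj]⟩⟩
  · have hthj : thinf j = 0 := by simp [hsol hsgn, hth0 j hj, hw j hj]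
    have := abs_mulVec_sub_apply_le_of_min hmin hS hthj
    rw [hsol hsgn, sub_sub_cancel_left, mulVec_neg, mulVec_smul, Pi.neg_apply, Pi.smul_apply,
      smul_eq_mul, abs_neg, abs_mul, abs_of_pos hxi] at this
    exact (mul_le_iff_le_one_right hxi).mp this
  · rw [← congrFun hsgn i, hsol hsgn]; rfl
  · have habs : ∀ i, |v i| ≤ 1 := fun i => by rcases hv i with h | h | h <;> simp [h]
    rw [eq_sub_smul_of_sign_conditions hSig hxi.le hmin hth0 hw hSw habs hout hin]
    funext i
    by_cases hi : i ∈ T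
    · exact (hin i hi).symm
    · simp [sgnv, hth0 i hi, hw i hi, not_not.mp ((hvT i).not.mpr hi)]
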